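/- Let L be an effect algebra and (μ_i) a sequence of real-valued additive measures on L. If (μ_i) is uniformly exhaustive, then (μ_i) is uniformly absolutely additive: for every orthogonal sequence (a_n) in L, the partial sums Σ_{k≤n} |μ_i(a_k)| converge uniformly in i. -/
import Mathlib


open Filter Topology
open scoped ENNReal NNReal

/-- An effect algebra: a partial commutative monoid with orthosupplementation
and the zero-one law. `D a b` means `a ⊕ b` is defined; `add` is the (junk-valued
outside `D`) total extension of `⊕`. -/
structure EffectAlgebra (L : Type*) where
  D : L → L → Prop
  add : L → L → L
  zero : L
  one : L
  comm_def : ∀ {a b}, D a b → D b a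
  comm : ∀ {a b}, D a b → add a b = add b a
  assoc_def₁ : ∀ {a b c}, D b c → D a (add b c) → D a b
  assoc_def₂ : ∀ {a b c}, D b c → D a (add b c) → D (add a b) c
  assoc : ∀ {a b c}, D b c → D a (add b c) → add (add a b) c = add a (add b c)
  orth : ∀ a, ∃! a', D a a' ∧ add a a' = one
  zero_one : ∀ {a}, D one a → a = zero

namespace EffectAlgebra

variable {L : Type*}

/-- The canonical order: `a ≤ b` iff `a ⊕ r = b` for some `r`. -/
def le (E : EffectAlgebra L) (a b : L) : Prop := ∃ r, E.D a r ∧ E.add a r = b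

/-- The orthosupplement `1 ⊖ a`. -/
noncomputable def compl (E : EffectAlgebra L) (a : L) : L := (E.orth a).choose

/-- Partial sums `a 0 ⊕ ⋯ ⊕ a n`. -/
def psum (E : EffectAlgebra L) (a : ℕ → L) : ℕ → L
  | 0 => a 0
  | n + 1 => E.add (E.psum a n) (a (n + 1))

/-- A sequence is orthogonal when all its finite orthosums are defined. -/
def Orthogonal (E : EffectAlgebra L) (a : ℕ → L) : Prop :=
  ∀ n, E.D (E.psum a n) (a (n + 1))

/-- `s` is the supremum of the set `S` in the canonical order. -/
def IsSup (E : EffectAlgebra L) (S : Set L) (s : L) : Prop :=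
  (∀ x ∈ S, E.le x s) ∧ ∀ u, (∀ x ∈ S, E.le x u) → E.le s u

/-- `s = ⊕ₙ a n`: the sequence is orthogonal and `s` is the sup of the finite orthosums. -/
def IsOrthoSum (E : EffectAlgebra L) (a : ℕ → L) (s : L) : Prop :=
  E.Orthogonal a ∧ E.IsSup (Set.range (E.psum a)) s

/-- Additive (finitely additive) measure. -/
def IsMeasure {G : Type*} [AddCommMonoid G] (E : EffectAlgebra L) (μ : L → G) : Prop :=
  ∀ a b, E.D a b → μ (E.add a b) = μ a + μ b

/-- σ-additivity: `μ (⊕ₙ a n) = Σₙ μ (a n)` whenever the orthosum exists. -/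
def SigmaAdditive {G : Type*} [AddCommMonoid G] [TopologicalSpace G]
    (E : EffectAlgebra L) (μ : L → G) : Prop :=
  ∀ a s, E.IsOrthoSum a s →
    Tendsto (fun n => ∑ k ∈ Finset.range n, μ (a k)) atTop (𝓝 (μ s))

/-- Exhaustivity: `μ (a n) → 0` along every orthogonal sequence. -/
def Exhaustive {G : Type*} [AddCommMonoid G] [TopologicalSpace G]
    (E : EffectAlgebra L) (μ : L → G) : Prop :=
  ∀ a, E.Orthogonal a → Tendsto (fun n => μ (a n)) atTop (𝓝 0)

/-- A generator: every element is the sup of an increasing sequence from `B`. -/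
def IsGenerator (E : EffectAlgebra L) (B : Set L) : Prop :=
  ∀ a : L, ∃ b : ℕ → L, (∀ n, b n ∈ B) ∧ (∀ n, E.le (b n) (b (n + 1)))
    ∧ E.IsSup (Set.range b) a

/-- Riesz decomposition property. -/
def RDP (E : EffectAlgebra L) : Prop :=
  ∀ a b c, E.D a b → E.le c (E.add a b) →
    ∃ c₁ c₂, E.D c₁ c₂ ∧ E.add c₁ c₂ = c ∧ E.le c₁ a ∧ E.le c₂ b

/-- Strong Riesz decomposition property. -/
def sRDP (E : EffectAlgebra L) : Prop :=
  ∀ (a : ℕ → L) (s c : L), E.IsOrthoSum a s → E.le c s →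
    ∃ c' : ℕ → L, E.IsOrthoSum c' c ∧ ∀ n, E.le (c' n) (a n)

/-- A natural basis: an orthogonal sequence of minimal nonzero elements with orthosum `1`. -/
def IsNaturalBasis (E : EffectAlgebra L) (b : ℕ → L) : Prop :=
  E.IsOrthoSum b E.one ∧
  ∀ n, b n ≠ E.zero ∧ ∀ c, c ≠ E.zero → E.le c (b n) → c = b n

/-- The set of finite orthosums of elements of the sequence `b`. -/
def finOrthosums (E : EffectAlgebra L) (b : ℕ → L) : Set L :=
  { x | ∃ c : ℕ → L, (∀ n, c n = b n ∨ c n = E.zero) ∧ E.Orthogonal c ∧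
        ∃ N, x = E.psum c N }

/-- A sequence of measures is pointwise convergent. -/
def PtwiseConv (μ : ℕ → L → ℝ) : Prop :=
  ∀ a : L, ∃ x : ℝ, Tendsto (fun i => μ i a) atTop (𝓝 x)

/-- Uniform exhaustivity of a sequence of measures. -/
def UnifExhaustive (E : EffectAlgebra L) (μ : ℕ → L → ℝ) : Prop :=
  ∀ a, E.Orthogonal a →
    TendstoUniformly (fun n (i : ℕ) => μ i (a n)) (fun _ => (0 : ℝ)) atTop

/-- Uniform strong additivity of a sequence of measures. -/
def UnifStronglyAdditive (E : EffectAlgebra L) (μ : ℕ → L → ℝ) : Prop :=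
  ∀ a, E.Orthogonal a → ∃ f : ℕ → ℝ,
    TendstoUniformly (fun n (i : ℕ) => ∑ k ∈ Finset.range n, μ i (a k)) f atTop

/-- The Nikodym property. -/
def Nikodym (E : EffectAlgebra L) : Prop :=
  ∀ μ : ℕ → L → ℝ, (∀ i, E.IsMeasure (μ i)) → (∀ i, ∃ M, ∀ a, |μ i a| ≤ M) →
    (∀ a : L, ∃ M, ∀ i, |μ i a| ≤ M) → ∃ M, ∀ i, ∀ a : L, |μ i a| ≤ M

/-- The Grothendieck property. -/
def Grothendieck (E : EffectAlgebra L) : Prop :=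
  ∀ μ : ℕ → L → ℝ, (∀ i, E.IsMeasure (μ i)) → (∀ i, ∃ M, ∀ a, |μ i a| ≤ M) →
    PtwiseConv μ → (∃ M, ∀ i, ∀ a : L, |μ i a| ≤ M) → E.UnifStronglyAdditive μ

/-- The Vitali-Hahn-Saks property. -/
def VHS (E : EffectAlgebra L) : Prop :=
  ∀ μ : ℕ → L → ℝ, (∀ i, E.IsMeasure (μ i)) → (∀ i, ∃ M, ∀ a, |μ i a| ≤ M) →
    PtwiseConv μ → E.UnifExhaustive μ

/-- The σ-Nikodym property. -/
def SigmaNikodym (E : EffectAlgebra L) : Prop :=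
  ∀ μ : ℕ → L → ℝ, (∀ i, E.IsMeasure (μ i)) → (∀ i, E.SigmaAdditive (μ i)) →
    (∀ i, ∃ M, ∀ a, |μ i a| ≤ M) →
    (∀ a : L, ∃ M, ∀ i, |μ i a| ≤ M) → ∃ M, ∀ i, ∀ a : L, |μ i a| ≤ M

/-- The σ-Vitali-Hahn-Saks property. -/
def SigmaVHS (E : EffectAlgebra L) : Prop :=
  ∀ μ : ℕ → L → ℝ, (∀ i, E.IsMeasure (μ i)) → (∀ i, E.SigmaAdditive (μ i)) →
    (∀ i, ∃ M, ∀ a, |μ i a| ≤ M) → PtwiseConv μ → E.UnifExhaustive μ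

/-- A bounding subset. -/
def Bounding (E : EffectAlgebra L) (B : Set L) : Prop :=
  ∀ (G : Type) [NormedAddCommGroup G], ∀ μ : ℕ → L → G,
    (∀ i, E.IsMeasure (μ i)) → (∀ i, E.SigmaAdditive (μ i)) →
    (∀ a : L, ∃ M, ∀ i, ‖μ i a‖ ≤ M) →
    ((∃ M, ∀ i, ∀ b ∈ B, ‖μ i b‖ ≤ M) ↔ (∃ M, ∀ i, ∀ a : L, ‖μ i a‖ ≤ M))

/-- A natural subset: a generator closed under orthosums of orthogonal pairs all of whose
orthogonal-complement slices are bounding. -/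
def NaturalSubset (E : EffectAlgebra L) (B : Set L) : Prop :=
  E.IsGenerator B ∧ (∀ b ∈ B, ∀ c ∈ B, E.D b c → E.add b c ∈ B) ∧
    ∀ b ∈ B, E.Bounding {c ∈ B | E.D c b}

/-- A natural effect algebra: one admitting a natural subset. -/
def Natural (E : EffectAlgebra L) : Prop := ∃ B, E.NaturalSubset B

/-- The orthogonally sequential property. -/
def OSP (E : EffectAlgebra L) : Prop :=
  ∀ b : ℕ → L, ∃ c : ℕ → L, E.Orthogonal c ∧ (∀ k, E.le (c k) (b k)) ∧
    ∀ (a : L) (k₀ : ℕ), E.le a (b k₀) → (∀ i, i ≠ k₀ → E.le (b i) (E.compl a)) →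
      E.le a (c k₀)

/-- The subsequential interpolation property. -/
def SIP (E : EffectAlgebra L) : Prop :=
  ∀ a : ℕ → L, E.Orthogonal a → ∀ M : Set ℕ, M.Infinite →
    ∃ (x : L) (N : Set ℕ), N ⊆ M ∧ N.Infinite ∧ (∀ n ∈ N, E.le (a n) x) ∧
      ∀ n ∉ N, E.le (a n) (E.compl x)

/-- Iterated orthosum starting from `x`: all steps defined. -/
def OrthoFrom (E : EffectAlgebra L) : L → List L → Prop
  | _, [] => True
  | x, y :: ys => E.D x y ∧ E.OrthoFrom (E.add x y) ys

/-- The orthosum `x ⊕ y₁ ⊕ ⋯ ⊕ yₙ` of a nonempty list. -/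
def psumList (E : EffectAlgebra L) : L → List L → L
  | x, [] => x
  | x, y :: ys => E.psumList (E.add x y) ys

/-- The variation of a measure: the sup over finite decompositions
`e = e₁ ⊕ ⋯ ⊕ eₙ` of `Σ ‖μ eᵢ‖`, valued in `[0,∞]`. -/
noncomputable def variation {G : Type*} [NormedAddCommGroup G]
    (E : EffectAlgebra L) (μ : L → G) (e : L) : ℝ≥0∞ :=
  sSup { v : ℝ≥0∞ | ∃ (x : L) (xs : List L), E.OrthoFrom x xs ∧ E.psumList x xs = e ∧
    v = ((x :: xs).map fun y => (‖μ y‖₊ : ℝ≥0∞)).sum }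

end EffectAlgebra

namespace EffectAlgebra

variable {L : Type*} (E : EffectAlgebra L)

lemma add_zero' (a : L) : E.D a E.zero ∧ E.add a E.zero = a := by
  obtain ⟨o, ⟨hD1, h1⟩, _⟩ := E.orth E.one
  have ho : o = E.zero := E.zero_one hD1
  subst ho
  obtain ⟨a', ⟨hDa, ha⟩, _⟩ := E.orth a
  rw [← ha] at hD1 h1
  have h2 : E.D E.zero (E.add a a') := E.comm_def hD1
  have h3 : E.D E.zero a := E.assoc_def₁ hDa h2
  have h4 : E.D (E.add E.zero a) a' := E.assoc_def₂ hDa h2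
  have h5 : E.add (E.add E.zero a) a' = E.add E.zero (E.add a a') := E.assoc hDa h2
  have h6 : E.add (E.add E.zero a) a' = E.one := by
    rw [h5, E.comm h2, h1, ha]
  obtain ⟨y, _, huniq⟩ := E.orth a'
  have e1 : a = y := huniq a ⟨E.comm_def hDa, by rw [← E.comm hDa]; exact ha⟩
  have e2 : E.add E.zero a = y := huniq _ ⟨E.comm_def h4, by rw [← E.comm h4]; exact h6⟩
  have e3 : E.add E.zero a = a := by rw [e2, ← e1]
  exact ⟨E.comm_def h3, by rw [← E.comm h3]; exact e3⟩

lemma assoc' {a b c : L} (h1 : E.D a b) (h2 : E.D (E.add a b) c) :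
    E.D b c ∧ E.D a (E.add b c) ∧ E.add (E.add a b) c = E.add a (E.add b c) := by
  have hc : E.D c (E.add a b) := E.comm_def h2
  have h3 : E.D c a := E.assoc_def₁ h1 hc
  have h4 : E.D (E.add c a) b := E.assoc_def₂ h1 hc
  have h4' : E.D b (E.add c a) := E.comm_def h4
  have h5 : E.D b c := E.assoc_def₁ h3 h4'
  have h6 : E.D (E.add b c) a := E.assoc_def₂ h3 h4'
  have h7 : E.D a (E.add b c) := E.comm_def h6
  exact ⟨h5, h7, E.assoc h5 h7⟩

lemma le_D' {x y z : L} (h : E.le x y) (hz : E.D y z) : E.D x z := by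
  obtain ⟨r, hr, hxy⟩ := h
  rw [← hxy] at hz
  obtain ⟨hrz, hx, -⟩ := E.assoc' hr hz
  rw [E.comm hrz] at hx
  exact E.assoc_def₁ (E.comm_def hrz) hx

lemma le_add_right' {x y z : L} (h : E.le x y) (hz : E.D y z) :
    E.D x z ∧ E.le (E.add x z) (E.add y z) := by
  obtain ⟨r, hr, hxy⟩ := h
  rw [← hxy] at hz ⊢
  obtain ⟨hrz, hx, heq⟩ := E.assoc' hr hz
  have hzr := E.comm_def hrz
  have hx' : E.D x (E.add z r) := by rw [← E.comm hrz]; exact hx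
  have hxz : E.D x z := E.assoc_def₁ hzr hx'
  have hD : E.D (E.add x z) r := E.assoc_def₂ hzr hx'
  refine ⟨hxz, r, hD, ?_⟩
  rw [E.assoc hzr hx', ← E.comm hrz]
  exact heq.symm

lemma le_refl' (a : L) : E.le a a := ⟨E.zero, (E.add_zero' a).1, (E.add_zero' a).2⟩

lemma zero_le' (a : L) : E.le E.zero a := by
  refine ⟨a, E.comm_def (E.add_zero' a).1, ?_⟩
  rw [E.comm (E.comm_def (E.add_zero' a).1)]
  exact (E.add_zero' a).2

lemma le_trans' {x y z : L} (h1 : E.le x y) (h2 : E.le y z) : E.le x z := by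
  obtain ⟨r, hr, hxy⟩ := h1; obtain ⟨s, hs, hyz⟩ := h2
  rw [← hxy] at hs hyz
  obtain ⟨hrs, hx, heq⟩ := E.assoc' hr hs
  exact ⟨E.add r s, hx, by rw [← heq]; exact hyz⟩

lemma psum_le_of_cases {a c : ℕ → L} (ha : E.Orthogonal a)
    (hc : ∀ k, c k = a k ∨ c k = E.zero) :
    (∀ n, E.le (E.psum c n) (E.psum a n)) ∧ E.Orthogonal c := by
  have key : ∀ n, E.le (E.psum c n) (E.psum a n) := by
    intro n; induction n with
    | zero =>
      rcases hc 0 with h | h <;> simp only [psum, h]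
      · exact E.le_refl' _
      · exact E.zero_le' _
    | succ n ih =>
      rcases hc (n+1) with h | h
      · have := (E.le_add_right' ih (ha n)).2
        simpa only [psum, h] using this
      · have h0 : E.psum c (n+1) = E.psum c n := by
          simp only [psum, h]; exact (E.add_zero' _).2
        rw [h0]
        exact E.le_trans' ih ⟨a (n+1), ha n, rfl⟩
  refine ⟨key, fun n => ?_⟩
  have hD : E.D (E.psum c n) (a (n+1)) := E.le_D' (key n) (ha n)
  rcases hc (n+1) with h | h
  · rw [h]; exact hD
  · rw [h]; exact (E.add_zero' _).1

/-- The orthosum `c (m+1) ⊕ ⋯ ⊕ c n` (equal to `0` for `n ≤ m`). -/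
def tsum (c : ℕ → L) (m : ℕ) : ℕ → L
  | 0 => E.zero
  | n + 1 => if n + 1 ≤ m then E.zero else E.add (tsum c m n) (c (n + 1))

lemma tsum_eq_zero {c : ℕ → L} {m n : ℕ} (h : n ≤ m) : E.tsum c m n = E.zero := by
  cases n with
  | zero => rfl
  | succ n => simp only [tsum, if_pos h]

lemma psum_add_tsum {c : ℕ → L} (hc : E.Orthogonal c) :
    ∀ {m n : ℕ}, m ≤ n → E.D (E.psum c m) (E.tsum c m n) ∧
      E.add (E.psum c m) (E.tsum c m n) = E.psum c n := by
  intro m n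
  induction n with
  | zero =>
    intro hmn
    have hm : m = 0 := Nat.le_zero.mp hmn
    subst hm
    have := E.add_zero' (E.psum c 0)
    simpa only [tsum] using this
  | succ n ih =>
    intro hmn
    rcases Nat.lt_or_ge m (n+1) with h | h
    · have hmn' : m ≤ n := Nat.lt_succ_iff.mp h
      obtain ⟨hD, heq⟩ := ih hmn'
      have horth : E.D (E.add (E.psum c m) (E.tsum c m n)) (c (n+1)) := by
        rw [heq]; exact hc n
      obtain ⟨h1, h2, h3⟩ := E.assoc' hD horth
      have ht : E.tsum c m (n+1) = E.add (E.tsum c m n) (c (n+1)) := by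
        simp only [tsum, if_neg (Nat.not_le.mpr h)]
      rw [ht]
      refine ⟨h2, ?_⟩
      rw [← h3, heq]
      rfl
    · have hm : m = n + 1 := le_antisymm hmn h
      subst hm
      rw [E.tsum_eq_zero (le_refl _)]
      exact E.add_zero' _

lemma tsum_add_tsum {c : ℕ → L} (hc : E.Orthogonal c) :
    ∀ {m n p : ℕ}, m ≤ n → n ≤ p → E.D (E.tsum c m n) (E.tsum c n p) ∧
      E.add (E.tsum c m n) (E.tsum c n p) = E.tsum c m p := by
  intro m n p
  induction p with
  | zero =>
    intro hmn hnp
    obtain rfl : n = 0 := Nat.le_zero.mp hnp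
    rw [E.tsum_eq_zero (Nat.zero_le 0)]
    exact E.add_zero' _
  | succ p ih =>
    intro hmn hnp
    rcases Nat.lt_or_ge n (p+1) with h | h
    · have hnp' : n ≤ p := Nat.lt_succ_iff.mp h
      obtain ⟨hD, heq⟩ := ih hmn hnp'
      have hmp : m ≤ p := le_trans hmn hnp'
      obtain ⟨hD1, heq1⟩ := E.psum_add_tsum hc hmp
      have hT : E.D (E.tsum c m p) (c (p+1)) := by
        have := hc p
        rw [← heq1] at this
        exact (E.assoc' hD1 this).1
      rw [← heq] at hT
      obtain ⟨h1, h2, h3⟩ := E.assoc' hD hT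
      have ht1 : E.tsum c n (p+1) = E.add (E.tsum c n p) (c (p+1)) := by
        simp only [tsum, if_neg (Nat.not_le.mpr h)]
      have ht2 : E.tsum c m (p+1) = E.add (E.tsum c m p) (c (p+1)) := by
        simp only [tsum, if_neg (Nat.not_le.mpr (lt_of_le_of_lt hmn h))]
      rw [ht1, ht2]
      exact ⟨h2, by rw [← h3, heq]⟩
    · have hn : n = p + 1 := le_antisymm hnp h
      subst hn
      rw [E.tsum_eq_zero (le_refl _)]
      exact E.add_zero' _

lemma blocks_orthogonal {c : ℕ → L} (hc : E.Orthogonal c) (N : ℕ → ℕ)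
    (hN : Monotone N) :
    E.Orthogonal (fun j => E.tsum c (N j) (N (j+1))) ∧
    ∀ j, E.psum (fun j => E.tsum c (N j) (N (j+1))) j = E.tsum c (N 0) (N (j+1)) := by
  have hps : ∀ j, E.psum (fun j => E.tsum c (N j) (N (j+1))) j
      = E.tsum c (N 0) (N (j+1)) := by
    intro j; induction j with
    | zero => rfl
    | succ j ih =>
      have h2 := (E.tsum_add_tsum hc (hN (Nat.zero_le (j+1))) (hN (Nat.le_succ (j+1)))).2
      show E.add (E.psum (fun j => E.tsum c (N j) (N (j+1))) j)
          (E.tsum c (N (j+1)) (N (j+2))) = _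
      rw [ih, h2]
  refine ⟨fun j => ?_, hps⟩
  show E.D (E.psum (fun j => E.tsum c (N j) (N (j+1))) j) (E.tsum c (N (j+1)) (N (j+2)))
  rw [hps j]
  exact (E.tsum_add_tsum hc (hN (Nat.zero_le (j+1))) (hN (Nat.le_succ (j+1)))).1

lemma measure_zero' {μ : L → ℝ} (hμ : E.IsMeasure μ) : μ E.zero = 0 := by
  have h := hμ E.zero E.zero (E.add_zero' E.zero).1
  rw [(E.add_zero' E.zero).2] at h
  linarith

lemma measure_psum {μ : L → ℝ} (hμ : E.IsMeasure μ) {c : ℕ → L} (hc : E.Orthogonal c) :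
    ∀ n, μ (E.psum c n) = ∑ k ∈ Finset.range (n+1), μ (c k) := by
  intro n; induction n with
  | zero => simp [psum]
  | succ n ih =>
    have h := hμ _ _ (hc n)
    show μ (E.add (E.psum c n) (c (n+1))) = _
    rw [h, ih, ← Finset.sum_range_succ]

lemma measure_tsum {μ : L → ℝ} (hμ : E.IsMeasure μ) {c : ℕ → L} (hc : E.Orthogonal c)
    {m n : ℕ} (h : m ≤ n) :
    μ (E.tsum c m n) = ∑ k ∈ Finset.Ico (m+1) (n+1), μ (c k) := by
  obtain ⟨hD, heq⟩ := E.psum_add_tsum hc h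
  have h2 := hμ _ _ hD
  rw [heq, E.measure_psum hμ hc, E.measure_psum hμ hc] at h2
  rw [Finset.sum_Ico_eq_sub _ (Nat.succ_le_succ h)]
  linarith

end EffectAlgebra

open EffectAlgebra in
/-- A uniformly exhaustive sequence of real-valued measures on an effect algebra is
uniformly absolutely additive. -/
theorem stmt11 {L : Type*} (E : EffectAlgebra L) (μ : ℕ → L → ℝ)
    (hμ : ∀ i, E.IsMeasure (μ i)) (hue : E.UnifExhaustive μ) :
    ∀ a : ℕ → L, E.Orthogonal a → ∃ f : ℕ → ℝ,
      TendstoUniformly (fun n (i : ℕ) => ∑ k ∈ Finset.range n, |μ i (a k)|) f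
        Filter.atTop := by
  classical
  intro a ha
  have key : ∀ ε : ℝ, 0 < ε → ∃ N : ℕ, ∀ m n : ℕ, N ≤ m → ∀ i,
      ∑ k ∈ Finset.Ico m n, |μ i (a k)| < ε := by
    by_contra hcon
    push_neg at hcon
    obtain ⟨ε, hε, hcon⟩ := hcon
    have step : ∀ N : ℕ, ∃ n, N < n ∧ ∃ i,
        ε ≤ ∑ k ∈ Finset.Ico (N+1) (n+1), |μ i (a k)| := by
      intro N
      obtain ⟨m, n, hm, i, hsum⟩ := hcon (N+1)
      have hmn : m < n := by
        by_contra h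
        push_neg at h
        rw [Finset.Ico_eq_empty (not_lt.mpr h)] at hsum
        simp only [Finset.sum_empty] at hsum
        linarith
      refine ⟨n - 1, by omega, i, le_trans hsum ?_⟩
      apply Finset.sum_le_sum_of_subset_of_nonneg
      · intro k hk
        rw [Finset.mem_Ico] at hk ⊢
        omega
      · intro k _ _; positivity
    choose nf hnf1 hnf2 using step
    set N : ℕ → ℕ := fun j => Nat.rec (motive := fun _ => ℕ) 0 (fun _ x => nf x) j with hNdef
    have hNsucc : ∀ j, N j < N (j+1) := fun j => hnf1 (N j)
    have hNmono : Monotone N := monotone_nat_of_le_succ (fun j => le_of_lt (hNsucc j))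
    choose idx hidx using fun j => hnf2 (N j)
    have split : ∀ j, ∃ S : Finset ℕ, S ⊆ Finset.Ico (N j + 1) (N (j+1) + 1) ∧
        ε/2 ≤ |∑ k ∈ S, μ (idx j) (a k)| := by
      intro j
      set B := Finset.Ico (N j + 1) (N (j+1) + 1) with hB
      set p : ℕ → Prop := fun k => 0 ≤ μ (idx j) (a k) with hp
      have hB2 : ε ≤ ∑ k ∈ B, |μ (idx j) (a k)| := hidx j
      have h1 : ∑ k ∈ B.filter p, |μ (idx j) (a k)| = ∑ k ∈ B.filter p, μ (idx j) (a k) :=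
        Finset.sum_congr rfl (fun k hk => abs_of_nonneg (Finset.mem_filter.mp hk).2)
      have h2 : ∑ k ∈ B.filter (fun k => ¬ p k), |μ (idx j) (a k)|
          = -∑ k ∈ B.filter (fun k => ¬ p k), μ (idx j) (a k) := by
        rw [← Finset.sum_neg_distrib]
        exact Finset.sum_congr rfl (fun k hk =>
          abs_of_neg (lt_of_not_ge (Finset.mem_filter.mp hk).2))
      have h3 := Finset.sum_filter_add_sum_filter_not B p (fun k => |μ (idx j) (a k)|)
      by_cases hcase : ε/2 ≤ ∑ k ∈ B.filter p, μ (idx j) (a k)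
      · exact ⟨B.filter p, Finset.filter_subset _ _, le_trans hcase (le_abs_self _)⟩
      · refine ⟨B.filter (fun k => ¬ p k), Finset.filter_subset _ _, ?_⟩
        push_neg at hcase
        rw [h1, h2] at h3
        exact le_trans (by linarith) (neg_le_abs _)
    choose S hS1 hS2 using split
    set Sset : Set ℕ := {k | ∃ j, k ∈ S j} with hSset
    set c : ℕ → L := fun k => if k ∈ Sset then a k else E.zero with hcdef
    have hc_cases : ∀ k, c k = a k ∨ c k = E.zero := by
      intro k; by_cases h : k ∈ Sset
      · left; simp [hcdef, h]
      · right; simp [hcdef, h]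
    obtain ⟨-, hcorth⟩ := E.psum_le_of_cases ha hc_cases
    obtain ⟨hborth, -⟩ := E.blocks_orthogonal hcorth N hNmono
    have hfilter : ∀ j, (Finset.Ico (N j + 1) (N (j+1) + 1)).filter (fun k => k ∈ Sset)
        = S j := by
      intro j
      ext k
      simp only [Finset.mem_filter]
      constructor
      · rintro ⟨hkB, j', hkS⟩
        have hjj : j' = j := by
          have h1 := Finset.mem_Ico.mp hkB
          have h2 := Finset.mem_Ico.mp (hS1 j' hkS)
          by_contra hne
          rcases Nat.lt_or_ge j j' with hlt | hge
          · have h5 : N (j + 1) ≤ N j' := hNmono (show j + 1 ≤ j' from hlt)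
            omega
          · have hlt : j' < j := lt_of_le_of_ne hge hne
            have h5 : N (j' + 1) ≤ N j := hNmono (show j' + 1 ≤ j from hlt)
            omega
        exact hjj ▸ hkS
      · intro hk
        exact ⟨hS1 j hk, j, hk⟩
    have hval : ∀ j, ε/2 ≤ |μ (idx j) (E.tsum c (N j) (N (j+1)))| := by
      intro j
      have hm := E.measure_tsum (hμ (idx j)) hcorth (hNmono (Nat.le_succ j))
      have hcc : ∀ k, μ (idx j) (c k) = if k ∈ Sset then μ (idx j) (a k) else 0 := by
        intro k
        by_cases h : k ∈ Sset <;> simp [hcdef, h, E.measure_zero' (hμ (idx j))]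
      have e1 : ∑ k ∈ Finset.Ico (N j + 1) (N (j+1) + 1), μ (idx j) (c k)
          = ∑ k ∈ Finset.Ico (N j + 1) (N (j+1) + 1),
              (if k ∈ Sset then μ (idx j) (a k) else 0) :=
        Finset.sum_congr rfl (fun k _ => hcc k)
      have e2 : ∑ k ∈ Finset.Ico (N j + 1) (N (j+1) + 1),
            (if k ∈ Sset then μ (idx j) (a k) else 0)
          = ∑ k ∈ (Finset.Ico (N j + 1) (N (j+1) + 1)).filter (fun k => k ∈ Sset),
              μ (idx j) (a k) := (Finset.sum_filter _ _).symm
      have hμval : μ (idx j) (E.tsum c (N j) (N (j+1))) = ∑ k ∈ S j, μ (idx j) (a k) := by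
        rw [hm, e1, e2, hfilter j]
      rw [hμval]
      exact hS2 j
    have hlim := hue (fun j => E.tsum c (N j) (N (j+1))) hborth
    rw [Metric.tendstoUniformly_iff] at hlim
    obtain ⟨J, hJ⟩ := Filter.eventually_atTop.mp (hlim (ε/2) (by linarith))
    have h1 := hJ J (le_refl J) (idx J)
    rw [Real.dist_eq] at h1
    simp only [zero_sub, abs_neg] at h1
    have h2 := hval J
    linarith
  have hunif : UniformCauchySeqOn (fun n (i : ℕ) => ∑ k ∈ Finset.range n, |μ i (a k)|)
      Filter.atTop Set.univ := by
    rw [Metric.uniformCauchySeqOn_iff]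
    intro ε hε
    obtain ⟨N, hN⟩ := key ε hε
    refine ⟨N, fun m hm n hn i _ => ?_⟩
    have habs : ∀ m n : ℕ, m ≤ n → N ≤ m →
        dist (∑ k ∈ Finset.range m, |μ i (a k)|) (∑ k ∈ Finset.range n, |μ i (a k)|) < ε := by
      intro m n h hNm
      rw [Real.dist_eq, abs_sub_comm, ← Finset.sum_Ico_eq_sub (fun k => |μ i (a k)|) h,
        abs_of_nonneg (Finset.sum_nonneg (fun k _ => abs_nonneg _))]
      exact hN m n hNm i
    rcases le_total m n with h | h
    · exact habs m n h hm
    · rw [dist_comm]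
      exact habs n m h hn
  have hcauchy : ∀ i : ℕ, ∃ x : ℝ,
      Filter.Tendsto (fun n => ∑ k ∈ Finset.range n, |μ i (a k)|) Filter.atTop (𝓝 x) :=
    fun i => cauchySeq_tendsto_of_complete (hunif.cauchySeq (Set.mem_univ i))
  choose f hf using hcauchy
  exact ⟨f, tendstoUniformlyOn_univ.mp
    (hunif.tendstoUniformlyOn_of_tendsto (fun i _ => hf i))⟩
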